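/- Let f : ℤ₂³ → ℤ be the indicator function of the set {001, 010, 011, 100, 111}, and let A u v = f(u + v) be the adjacency matrix of Cay(ℤ₂³, f). Then perfect state transfer occurs at time π/2 between every pair of vertices u, v with u + v = 011: for all u, v ∈ ℤ₂³ with u + v = 011, the (v,u) entry of exp(-(i π/2)·A) has absolute value 1. In particular, PST occurs between the pairs {000,011}, {001,010}, {100,111}, {101,110}. -/

import Mathlib

open Matrix Complex Finset

/-! For `f` the indicator of `S`, the matrix `A` is `∑ s ∈ S, T s`, where `T s` is the permutation
matrix of translation by `s`. In an elementary abelian 2-group the `T s` commute and square to `1`,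
so `exp (-iθ T s) = cos θ - i sin θ T s`, which is `-i T s` at `θ = π/2`. Hence
`exp (-iπ/2 A) = (-i) ^ #S T (∑ s ∈ S, s)` is a monomial matrix, and here `∑ s ∈ S, s = 011`. -/

section Involution

variable {𝔸 : Type*} [Ring 𝔸] [Algebra ℂ 𝔸] [TopologicalSpace 𝔸] [IsTopologicalRing 𝔸]
  [ContinuousSMul ℂ 𝔸] [T2Space 𝔸]

/-- As `M ^ 2 = 1`, the even and odd parts of the exponential series are the series of `cos`
and `sin`. -/
theorem exp_neg_I_mul_smul_of_mul_self_eq_one {M : 𝔸} (hM : M * M = 1) (θ : ℂ) :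
    NormedSpace.exp (-(I * θ) • M) = cos θ • (1 : 𝔸) - (I * sin θ) • M := by
  have hM2 : M ^ 2 = 1 := by rw [sq, hM]
  have hIθ : (-(I * θ)) ^ 2 = -θ ^ 2 := by rw [neg_sq, mul_pow, I_sq, neg_one_mul]
  rw [NormedSpace.exp_eq_tsum ℂ, sub_eq_add_neg, ← neg_smul]
  refine HasSum.tsum_eq (HasSum.even_add_odd ?_ ?_)
  · convert (hasSum_cos θ).smul_const (1 : 𝔸) using 2 with k
    rw [smul_pow, pow_mul, pow_mul, hM2, one_pow, hIθ, smul_smul, neg_pow]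
    ring_nf
  · convert ((hasSum_sin θ).mul_left (-I)).smul_const M using 2 with k
    · rw [smul_pow, pow_succ M, pow_mul M, hM2, one_pow, one_mul, pow_succ, pow_mul, hIθ,
        smul_smul, neg_pow]
      ring_nf
    · ring

theorem exp_neg_I_mul_pi_div_two_smul_of_mul_self_eq_one {M : 𝔸} (hM : M * M = 1) :
    NormedSpace.exp (-(I * (Real.pi / 2)) • M) = -I • M := by
  rw [exp_neg_I_mul_smul_of_mul_self_eq_one hM, cos_pi_div_two, sin_pi_div_two]
  simp

end Involution

section Translation

variable {G : Type*} [AddCommGroup G] [DecidableEq G] (R : Type*)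

def translationMatrix [Zero R] [One R] (s : G) : Matrix G G R :=
  (Equiv.addRight s).permMatrix R

variable {R}

theorem translationMatrix_apply [Zero R] [One R] (s u v : G) :
    translationMatrix R s u v = if u + s = v then 1 else 0 := by
  simp [translationMatrix, PEquiv.toMatrix_apply]

theorem translationMatrix_zero [Zero R] [One R] : translationMatrix R (0 : G) = 1 := by
  simp [translationMatrix]

theorem sum_translationMatrix_apply [AddCommMonoidWithOne R] (S : Finset G) (u v : G) :
    (∑ s ∈ S, translationMatrix R s) u v = if v - u ∈ S then 1 else 0 := by
  simp only [Matrix.sum_apply, translationMatrix_apply, ← eq_sub_iff_add_eq', sum_ite_eq']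

variable [Fintype G]

theorem translationMatrix_add [NonAssocSemiring R] (s t : G) :
    translationMatrix R (s + t) = translationMatrix R s * translationMatrix R t := by
  rw [translationMatrix, Equiv.addRight_add, permMatrix_mul]
  rfl

theorem commute_translationMatrix [NonAssocSemiring R] (s t : G) :
    Commute (translationMatrix R s) (translationMatrix R t) := by
  rw [Commute, SemiconjBy, ← translationMatrix_add, ← translationMatrix_add, add_comm]

theorem translationMatrix_mul_self [Module (ZMod 2) G] [NonAssocSemiring R] (s : G) :
    translationMatrix R s * translationMatrix R s = 1 := by
  rw [← translationMatrix_add, ZModModule.add_self, translationMatrix_zero]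

theorem exp_neg_I_mul_pi_div_two_smul_sum_translationMatrix [Module (ZMod 2) G] (S : Finset G) :
    NormedSpace.exp (-(I * (Real.pi / 2)) • ∑ s ∈ S, translationMatrix ℂ s) =
      (-I) ^ #S • translationMatrix ℂ (∑ s ∈ S, s) := by
  induction S using Finset.induction_on with
  | empty => simp [translationMatrix_zero]
  | insert a S ha ih =>
    have hcomm : Commute (-(I * (Real.pi / 2)) • translationMatrix ℂ a)
        (-(I * (Real.pi / 2)) • ∑ s ∈ S, translationMatrix ℂ s) :=
      ((Commute.sum_right _ _ _ fun s _ => commute_translationMatrix a s).smul_left _).smul_right _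
    rw [sum_insert ha, sum_insert ha, smul_add, Matrix.exp_add_of_commute _ _ hcomm, ih,
      exp_neg_I_mul_pi_div_two_smul_of_mul_self_eq_one (translationMatrix_mul_self a),
      card_insert_of_notMem ha, translationMatrix_add, smul_mul_smul, pow_succ']

end Translation

theorem augmented_cube_pst
    (f : (Fin 3 → ZMod 2) → ℤ)
    (hf : ∀ y, f y = if y = ![0,0,1] ∨ y = ![0,1,0] ∨ y = ![0,1,1] ∨
      y = ![1,0,0] ∨ y = ![1,1,1] then 1 else 0)
    (A : Matrix (Fin 3 → ZMod 2) (Fin 3 → ZMod 2) ℂ)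
    (hA : ∀ u v, A u v = (f (u + v) : ℂ)) :
    ∀ u v : Fin 3 → ZMod 2, u + v = ![0,1,1] →
      ‖NormedSpace.exp ((-(Complex.I * (Real.pi / 2))) • A) v u‖ = 1 := by
  intro u v huv
  set S : Finset (Fin 3 → ZMod 2) := {![0,0,1], ![0,1,0], ![0,1,1], ![1,0,0], ![1,1,1]}
  have hA_sum : A = ∑ s ∈ S, translationMatrix ℂ s := by
    ext a b
    rw [hA, hf, sum_translationMatrix_apply, ZModModule.sub_eq_add, add_comm b]
    simp only [S, mem_insert, mem_singleton, Int.cast_ite, Int.cast_one, Int.cast_zero]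
  have hS_card : #S = 5 := by decide
  have hS_sum : ∑ s ∈ S, s = ![0,1,1] := by decide
  have hv : v + ∑ s ∈ S, s = u := by
    rw [hS_sum, ← huv, add_left_comm, ZModModule.add_self, add_zero]
  rw [hA_sum, exp_neg_I_mul_pi_div_two_smul_sum_translationMatrix, Matrix.smul_apply,
    translationMatrix_apply, if_pos hv, hS_card]
  simp
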